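/- arXiv:2302.13758 — 4 statements merged into one kernel-verified Lean document; each statement's English description precedes it below -/
import Mathlib

section
/- Let K be an imaginary quadratic field, 𝔪 an integral ideal, and let I_i, I_{j} be integral ideals coprime to 𝔪 with 𝔮 a prime ideal coprime to 𝔪 satisfying 𝔮 I_i = (α) I_{j} for some α ∈ K^×. If x ∈ I_i and y ∈ O_K with either y ∈ 𝔪 or y a unit modulo 𝔪, then α⁻¹·(x/y) can be written as x'/y' with x' ∈ I_{j} and either y' ∈ 𝔪 or y' a unit modulo 𝔪. -/
open NumberField FractionalIdeal nonZeroDivisors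

/-- Let `K` be an imaginary quadratic field, `𝔪` an integral ideal, and let
`I_i`, `I_j` be integral ideals coprime to `𝔪` with `𝔮` a prime ideal coprime to `𝔪`
satisfying `𝔮 I_i = (α) I_j` for some `α ∈ K^×`.  If `x ∈ I_i` and `y ∈ O_K` with either
`y ∈ 𝔪` or `y` a unit modulo `𝔪`, then `α⁻¹·(x/y)` can be written as `x'/y'` with
`x' ∈ I_j` and either `y' ∈ 𝔪` or `y'` a unit modulo `𝔪`. -/
theorem stmt1 (K : Type*) [Field K] [NumberField K]
    (hdeg : Module.finrank ℚ K = 2)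
    (himag : ∀ v : NumberField.InfinitePlace K, v.IsComplex)
    (𝔪 Ii Ij 𝔮 : Ideal (𝓞 K))
    (hIi : Ii ≠ ⊥) (hIj : Ij ≠ ⊥) (h𝔮bot : 𝔮 ≠ ⊥) (h𝔮 : 𝔮.IsPrime)
    (h𝔮𝔪 : IsCoprime 𝔮 𝔪) (hi𝔪 : IsCoprime Ii 𝔪) (hj𝔪 : IsCoprime Ij 𝔪)
    (α : K) (hα : α ≠ 0)
    (hfac : (𝔮 : FractionalIdeal (𝓞 K)⁰ K) * (Ii : FractionalIdeal (𝓞 K)⁰ K) =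
      FractionalIdeal.spanSingleton (𝓞 K)⁰ α * (Ij : FractionalIdeal (𝓞 K)⁰ K))
    (x y : 𝓞 K) (hx : x ∈ Ii)
    (hy : y ∈ 𝔪 ∨ IsUnit (Ideal.Quotient.mk 𝔪 y)) :
    ∃ x' y' : 𝓞 K, x' ∈ Ij ∧ (y' ∈ 𝔪 ∨ IsUnit (Ideal.Quotient.mk 𝔪 y')) ∧
      α⁻¹ * (algebraMap (𝓞 K) K x / algebraMap (𝓞 K) K y) =
        algebraMap (𝓞 K) K x' / algebraMap (𝓞 K) K y' := by
  -- Choose q ∈ 𝔮 with q ≠ 0 and q a unit mod 𝔪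
  obtain ⟨q, hq𝔮, hq0, hqu⟩ :
      ∃ q : 𝓞 K, q ∈ 𝔮 ∧ q ≠ 0 ∧ IsUnit (Ideal.Quotient.mk 𝔪 q) := by
    obtain ⟨a, ha, b, hb, hab⟩ := Ideal.isCoprime_iff_exists.mp h𝔮𝔪
    by_cases h : a = 0
    · have h𝔪 : 𝔪 = ⊤ := by
        rw [Ideal.eq_top_iff_one]
        have : b = 1 := by simpa [h] using hab
        exact this ▸ hb
      obtain ⟨q, hq𝔮, hq0⟩ := Submodule.exists_mem_ne_zero_of_ne_bot h𝔮bot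
      refine ⟨q, hq𝔮, hq0, ?_⟩
      have : Ideal.Quotient.mk 𝔪 q = Ideal.Quotient.mk 𝔪 1 :=
        Ideal.Quotient.eq.mpr (by simp [h𝔪])
      rw [this, _root_.map_one]; exact isUnit_one
    · refine ⟨a, ha, h, ?_⟩
      have : Ideal.Quotient.mk 𝔪 a = Ideal.Quotient.mk 𝔪 1 :=
        Ideal.Quotient.eq.mpr (by
          have : a - 1 = -b := by linear_combination hab
          rw [this]; exact 𝔪.neg_mem hb)
      rw [this, _root_.map_one]; exact isUnit_one
  -- q * x ∈ 𝔮 * Ii, hence α⁻¹ * (q*x) corresponds to an element of Ij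
  have hmem : (algebraMap (𝓞 K) K) (q * x) ∈
      ((𝔮 * Ii : Ideal (𝓞 K)) : FractionalIdeal (𝓞 K)⁰ K) :=
    FractionalIdeal.mem_coeIdeal_of_mem _ (Ideal.mul_mem_mul hq𝔮 hx)
  rw [FractionalIdeal.coeIdeal_mul, hfac, FractionalIdeal.mem_singleton_mul] at hmem
  obtain ⟨z, hz, hzeq⟩ := hmem
  obtain ⟨x', hx'Ij, hx'⟩ := (FractionalIdeal.mem_coeIdeal _).mp hz
  refine ⟨x', q * y, hx'Ij, ?_, ?_⟩
  · rcases hy with hy | hy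
    · exact Or.inl (Ideal.mul_mem_left _ _ hy)
    · exact Or.inr (by rw [RingHom.map_mul]; exact hqu.mul hy)
  · have hqK : (algebraMap (𝓞 K) K) q ≠ 0 := by
      simpa using hq0
    have hx'eq : (algebraMap (𝓞 K) K) x' =
        α⁻¹ * ((algebraMap (𝓞 K) K) q * (algebraMap (𝓞 K) K) x) := by
      rw [hx']
      field_simp
      rw [mul_comm, ← hzeq, _root_.map_mul]
    rw [_root_.map_mul, hx'eq, mul_div_assoc, mul_div_mul_left _ _ hqK]
end

section
/- Let 𝔮 be a prime ideal of an imaginary quadratic field K coprime to an integral ideal 𝔪, and let I, J be integral ideals coprime to 𝔪 with 𝔮 I = (α) J for some α ∈ K^×. Then there exist y_𝔮 ∈ 𝔮, y_I ∈ I, and t ∈ J such that y_𝔮 and y_I are units modulo 𝔪 and α = y_𝔮 y_I / t. -/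
/-! Coprimality to `𝔪` gives nonzero `y_𝔮 ∈ 𝔮` and `y_I ∈ I` congruent to `1` modulo `𝔪`.
Their product lies in `𝔮 I = (α) J`, so it equals `α t` for some nonzero `t ∈ J`. -/

open NumberField FractionalIdeal nonZeroDivisors

theorem Ideal.exists_mem_ne_zero_isUnit_mk_of_isCoprime {R : Type*} [CommRing R] {A 𝔪 : Ideal R}
    (hA : A ≠ ⊥) (h : IsCoprime A 𝔪) :
    ∃ y ∈ A, y ≠ 0 ∧ IsUnit (Ideal.Quotient.mk 𝔪 y) := by
  obtain ⟨a, ha, m, hm, ham⟩ := Ideal.isCoprime_iff_exists.mp h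
  by_cases ha0 : a = 0
  · -- then `m = 1`, so `R ⧸ 𝔪` is trivial and any nonzero element of `A` will do
    have : Subsingleton (R ⧸ 𝔪) := Ideal.Quotient.subsingleton_iff.mpr <|
      (Ideal.eq_top_iff_one 𝔪).mpr ((by simpa [ha0] using ham : m = 1) ▸ hm)
    obtain ⟨z, hz, hz0⟩ := Submodule.exists_mem_ne_zero_of_ne_bot hA
    exact ⟨z, hz, hz0, isUnit_of_subsingleton _⟩
  · refine ⟨a, ha, ha0, ?_⟩
    have : Ideal.Quotient.mk 𝔪 a = 1 := by
      rw [← map_one (Ideal.Quotient.mk 𝔪), Ideal.Quotient.mk_eq_mk_iff_sub_mem, ← ham]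
      simpa using hm
    exact this ▸ isUnit_one

theorem FractionalIdeal.exists_mem_div_eq_of_coeIdeal_eq_spanSingleton_mul {R K : Type*}
    [CommRing R] [Field K] [Algebra R K] [IsFractionRing R K] {I J : Ideal R} {α : K}
    (h : (I : FractionalIdeal R⁰ K) = spanSingleton R⁰ α * J) {x : R} (hx : x ∈ I)
    (hx0 : x ≠ 0) :
    ∃ t ∈ J, t ≠ 0 ∧ α = algebraMap R K x / algebraMap R K t := by
  obtain ⟨_, htJ, hxt⟩ := (eq_spanSingleton_mul.mp h).1 _ (mem_coeIdeal_of_mem _ hx)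
  obtain ⟨t, ht, rfl⟩ := (mem_coeIdeal _).mp htJ
  have hx0' : algebraMap R K x ≠ 0 := (map_ne_zero_iff _ (IsFractionRing.injective R K)).mpr hx0
  have ht0 : algebraMap R K t ≠ 0 := by
    rintro ht0
    rw [ht0, mul_zero] at hxt
    exact hx0' hxt.symm
  refine ⟨t, ht, fun h => ht0 (by simp [h]), ?_⟩
  rw [eq_div_iff ht0, hxt]

theorem stmt2_general (K : Type*) [Field K] [NumberField K]
    (𝔪 𝔮 I J : Ideal (𝓞 K))
    (h𝔮bot : 𝔮 ≠ ⊥) (hI : I ≠ ⊥)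
    (h𝔮𝔪 : IsCoprime 𝔮 𝔪) (hI𝔪 : IsCoprime I 𝔪)
    (α : K)
    (hfac : (𝔮 : FractionalIdeal (𝓞 K)⁰ K) * (I : FractionalIdeal (𝓞 K)⁰ K) =
      FractionalIdeal.spanSingleton (𝓞 K)⁰ α * (J : FractionalIdeal (𝓞 K)⁰ K)) :
    ∃ y𝔮 yI t : 𝓞 K, y𝔮 ∈ 𝔮 ∧ yI ∈ I ∧ t ∈ J ∧ t ≠ 0 ∧
      IsUnit (Ideal.Quotient.mk 𝔪 y𝔮) ∧ IsUnit (Ideal.Quotient.mk 𝔪 yI) ∧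
      α = algebraMap (𝓞 K) K (y𝔮 * yI) / algebraMap (𝓞 K) K t := by
  obtain ⟨y𝔮, hy𝔮, hy𝔮0, hy𝔮u⟩ := Ideal.exists_mem_ne_zero_isUnit_mk_of_isCoprime h𝔮bot h𝔮𝔪
  obtain ⟨yI, hyI, hyI0, hyIu⟩ := Ideal.exists_mem_ne_zero_isUnit_mk_of_isCoprime hI hI𝔪
  rw [← coeIdeal_mul] at hfac
  obtain ⟨t, ht, ht0, hα⟩ := exists_mem_div_eq_of_coeIdeal_eq_spanSingleton_mul hfac
    (Ideal.mul_mem_mul hy𝔮 hyI) (mul_ne_zero hy𝔮0 hyI0)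
  exact ⟨y𝔮, yI, t, hy𝔮, hyI, ht, ht0, hy𝔮u, hyIu, hα⟩

/-- Let `𝔮` be a prime ideal of an imaginary quadratic field `K` coprime to
an integral ideal `𝔪`, and let `I`, `J` be integral ideals coprime to `𝔪` with
`𝔮 I = (α) J` for some `α ∈ K^×`.  Then there exist `y_𝔮 ∈ 𝔮`, `y_I ∈ I` and `t ∈ J`
such that `y_𝔮` and `y_I` are units modulo `𝔪` and `α = y_𝔮 y_I / t`. -/
theorem stmt2 (K : Type*) [Field K] [NumberField K]
    (hdeg : Module.finrank ℚ K = 2)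
    (himag : ∀ v : NumberField.InfinitePlace K, v.IsComplex)
    (𝔪 𝔮 I J : Ideal (𝓞 K))
    (h𝔮bot : 𝔮 ≠ ⊥) (h𝔮 : 𝔮.IsPrime) (hI : I ≠ ⊥) (hJ : J ≠ ⊥)
    (h𝔮𝔪 : IsCoprime 𝔮 𝔪) (hI𝔪 : IsCoprime I 𝔪) (hJ𝔪 : IsCoprime J 𝔪)
    (α : K) (hα : α ≠ 0)
    (hfac : (𝔮 : FractionalIdeal (𝓞 K)⁰ K) * (I : FractionalIdeal (𝓞 K)⁰ K) =
      FractionalIdeal.spanSingleton (𝓞 K)⁰ α * (J : FractionalIdeal (𝓞 K)⁰ K)) :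
    ∃ y𝔮 yI t : 𝓞 K, y𝔮 ∈ 𝔮 ∧ yI ∈ I ∧ t ∈ J ∧ t ≠ 0 ∧
      IsUnit (Ideal.Quotient.mk 𝔪 y𝔮) ∧ IsUnit (Ideal.Quotient.mk 𝔪 yI) ∧
      α = algebraMap (𝓞 K) K (y𝔮 * yI) / algebraMap (𝓞 K) K t :=
  stmt2_general K 𝔪 𝔮 I J h𝔮bot hI h𝔮𝔪 hI𝔪 α hfac
end

section
/- Let Γ be a group acting on a set C such that the set of orbits C/Γ is finite, and suppose Γ is finitely generated. Then the group Δ⁰_C of degree-zero divisors on C (formal ℤ-linear combinations of elements of C with coefficient sum zero) is finitely generated as a module over the group ring ℤ[Γ]. -/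
/-!
Fix a base point `c₀`. The degree-zero divisors are spanned over `ℤ` by the differences
`[c] - [c₀]`. Since `γ ↦ [γ c₀] - [c₀]` is a cocycle,
`[x y c₀] - [c₀] = x • ([y c₀] - [c₀]) + ([x c₀] - [c₀])`, the differences `[t c₀] - [c₀]` for
`t` in a finite generating set of `Γ` produce all `[γ c₀] - [c₀]` as a `ℤ[Γ]`-module. Then
`[c] - [c₀] = γ⁻¹ • ([γ c] - [c₀]) + ([γ⁻¹ c₀] - [c₀])` reduces every point `c` to a fixed
representative `γ c` of its orbit, of which there are finitely many.
-/

open Finsupp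

-- `γ • D = D.mapDomain (γ • ·)`: the `ℤ[Γ]`-module structure of `Δ_C`.
attribute [local instance] Finsupp.comapSMul Finsupp.comapMulAction Finsupp.comapDistribMulAction

theorem AddSubgroup.smul_mem_closure {M A : Type*} [AddGroup A] [DistribSMul M A] {s : Set A}
    (hs : ∀ (m : M), ∀ x ∈ s, m • x ∈ s) (m : M) {x : A}
    (hx : x ∈ closure s) : m • x ∈ closure s :=
  (closure_le ((closure s).comap (DistribSMul.toAddMonoidHom A m))).2
    (fun y hy => subset_closure (hs m y hy)) hx

theorem Finsupp.sub_single_degree_mem_closure {α : Type*} (c₀ : α) (D : α →₀ ℤ) :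
    D - single c₀ (degree D) ∈
      AddSubgroup.closure (Set.range fun c => single c 1 - single c₀ 1) := by
  induction D using Finsupp.induction_linear with
  | zero => simp
  | add f g hf hg =>
    rw [map_add, single_add, add_sub_add_comm]
    exact add_mem hf hg
  | single c n =>
    have hsingle : single c n - single c₀ n = n • (single c 1 - single c₀ 1) := by
      simp [smul_sub, smul_single]
    rw [degree_single, hsingle]
    exact AddSubgroup.zsmul_mem _ (AddSubgroup.subset_closure (Set.mem_range_self c)) n

section

variable {Γ C : Type*} [Group Γ] [MulAction Γ C] {H : AddSubgroup (C →₀ ℤ)}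

theorem comapSMul_single_sub_single (γ : Γ) (c c' : C) :
    γ • (single c (1 : ℤ) - single c' 1) = single (γ • c) 1 - single (γ • c') 1 := by
  rw [smul_sub, comapSMul_single, comapSMul_single]

theorem single_smul_sub_single_mem_of_closure_eq_top (hH : ∀ (γ : Γ), ∀ x ∈ H, γ • x ∈ H)
    {T : Set Γ} (hT : Subgroup.closure T = ⊤) {c₀ : C}
    (hTH : ∀ t ∈ T, single (t • c₀) 1 - single c₀ 1 ∈ H)
    (γ : Γ) : single (γ • c₀) 1 - single c₀ 1 ∈ H := by
  have hγ : γ ∈ Subgroup.closure T := hT ▸ Subgroup.mem_top γ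
  induction hγ using Subgroup.closure_induction with
  | mem t ht => exact hTH t ht
  | one => simp
  | mul x y _ _ hx hy =>
    have hcocycle : single ((x * y) • c₀) (1 : ℤ) - single c₀ 1 =
        x • (single (y • c₀) 1 - single c₀ 1) + (single (x • c₀) 1 - single c₀ 1) := by
      rw [comapSMul_single_sub_single, mul_smul, sub_add_sub_cancel]
    rw [hcocycle]
    exact add_mem (hH x _ hy) hx
  | inv x _ hx =>
    have hcocycle : single (x⁻¹ • c₀) (1 : ℤ) - single c₀ 1 =
        -(x⁻¹ • (single (x • c₀) 1 - single c₀ 1)) := by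
      rw [comapSMul_single_sub_single, inv_smul_smul, neg_sub]
    rw [hcocycle]
    exact neg_mem (hH _ _ hx)

theorem mem_of_degree_eq_zero_of_smul_mem (hH : ∀ (γ : Γ), ∀ x ∈ H, γ • x ∈ H) {T : Set Γ}
    (hT : Subgroup.closure T = ⊤) {c₀ : C} (hTH : ∀ t ∈ T, single (t • c₀) 1 - single c₀ 1 ∈ H)
    (horb : ∀ c : C, ∃ γ : Γ, single (γ • c) 1 - single c₀ 1 ∈ H)
    {D : C →₀ ℤ} (hD : degree D = 0) : D ∈ H := by
  have hbasis : ∀ c : C, single c 1 - single c₀ 1 ∈ H := fun c => by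
    obtain ⟨γ, hγ⟩ := horb c
    have hdecomp : single c (1 : ℤ) - single c₀ 1 =
        γ⁻¹ • (single (γ • c) 1 - single c₀ 1) + (single (γ⁻¹ • c₀) 1 - single c₀ 1) := by
      rw [comapSMul_single_sub_single, inv_smul_smul, sub_add_sub_cancel]
    rw [hdecomp]
    exact add_mem (hH _ _ hγ) (single_smul_sub_single_mem_of_closure_eq_top hH hT hTH _)
  have hspan := sub_single_degree_mem_closure c₀ D
  rw [hD, single_zero, sub_zero] at hspan
  exact (AddSubgroup.closure_le H).2 (Set.range_subset_iff.2 hbasis) hspan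

end

/-- Let `Γ` be a finitely generated group acting on a set `C` with finitely
many orbits.  Then the group `Δ⁰_C` of degree-zero divisors on `C` (finitely supported
`ℤ`-valued functions on `C` whose coefficients sum to zero) is finitely generated as a
module over the group ring `ℤ[Γ]`: there are finitely many degree-zero divisors whose
`Γ`-translates generate `Δ⁰_C` as an abelian group. -/
theorem stmt3 {Γ C : Type*} [Group Γ] [MulAction Γ C]
    (horb : Finite (MulAction.orbitRel.Quotient Γ C))
    (hfg : Group.FG Γ) :
    ∃ S : Finset (C →₀ ℤ),
      (∀ D ∈ S, D.sum (fun _ n => n) = 0) ∧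
      ∀ D : C →₀ ℤ, D.sum (fun _ n => n) = 0 →
        D ∈ AddSubgroup.closure
          {E : C →₀ ℤ | ∃ γ : Γ, ∃ D₀ ∈ S, E = Finsupp.mapDomain (fun c => γ • c) D₀} := by
  classical
  rcases isEmpty_or_nonempty C with hC | hC
  · exact ⟨∅, by simp, fun D _ => Subsingleton.elim (0 : C →₀ ℤ) D ▸ zero_mem _⟩
  obtain ⟨c₀⟩ := hC
  obtain ⟨T, hT⟩ := hfg.out
  have := Fintype.ofFinite (MulAction.orbitRel.Quotient Γ C)
  let e : C → C →₀ ℤ := fun c => single c 1 - single c₀ 1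
  let S := Finset.univ.image (fun q : MulAction.orbitRel.Quotient Γ C => e q.out) ∪
    T.image (fun t => e (t • c₀))
  refine ⟨S, fun D hDS => ?_, fun D hD => ?_⟩
  · change degree D = 0
    simp only [S, Finset.mem_union, Finset.mem_image] at hDS
    rcases hDS with ⟨q, -, rfl⟩ | ⟨t, -, rfl⟩ <;> simp [e]
  simp_rw [← comapSMul_def]
  have hSH : ∀ D ∈ S, D ∈ AddSubgroup.closure {E : C →₀ ℤ | ∃ γ : Γ, ∃ D₀ ∈ S, E = γ • D₀} :=
    fun D hDS => AddSubgroup.subset_closure ⟨1, D, hDS, (one_smul Γ D).symm⟩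
  refine mem_of_degree_eq_zero_of_smul_mem (c₀ := c₀)
    (fun γ x hx => AddSubgroup.smul_mem_closure ?_ γ hx) hT (fun t ht => hSH _ ?_) (fun c => ?_) hD
  · rintro γ _ ⟨δ, D₀, hD₀, rfl⟩
    exact ⟨γ * δ, D₀, hD₀, (mul_smul γ δ D₀).symm⟩
  · exact Finset.mem_union_right _ (Finset.mem_image_of_mem _ ht)
  · obtain ⟨γ, hγ⟩ : Quotient.out (⟦c⟧ : MulAction.orbitRel.Quotient Γ C) ∈ MulAction.orbit Γ c :=
      Quotient.mk_out (s := MulAction.orbitRel Γ C) c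
    refine ⟨γ, ?_⟩
    rw [show γ • c = _ from hγ]
    exact hSH _ (Finset.mem_union_left _ (Finset.mem_image_of_mem _ (Finset.mem_univ _)))
end

section
/- Let 𝔣 be an ideal of the ring of integers O_K of an imaginary quadratic field, coprime to 𝔪, and let I, J be ideals coprime to 𝔣 and 𝔪 with 𝔣·J = (α)·I for some α ∈ K^×. Then as b ranges over a set of representatives of (O_K/𝔣)^×, and d_b ∈ J is chosen with d_b ≡ b (mod 𝔣), the elements a = d_b/α range over a complete set of coset representatives of the classes [a] ∈ 𝔣⁻¹/O_K with (a)𝔣 coprime to 𝔣. -/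
/-!
Since `𝔣 J = (α) I`, division by `α` maps `J` onto `I 𝔣⁻¹`, and `I 𝔣⁻¹ + O_K = 𝔣⁻¹` because
`I + 𝔣 = O_K`. For `c ∈ J` the quotient `c / α` is integral exactly when `c ∈ J ∩ 𝔣 = 𝔣 J`, so
`b ↦ d_b / α` induces a bijection `O_K / 𝔣 ≃ 𝔣⁻¹ / O_K`. Moreover `A = (c / α) 𝔣` is an integral
ideal with `A J = (c) I`; as `I` and `J` are coprime to `𝔣`, `A` is coprime to `𝔣` exactly when
`c` is a unit modulo `𝔣`. Finally, whether `(a) 𝔣` is coprime to `𝔣` depends only on `a`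
modulo `O_K`.
-/

open NumberField FractionalIdeal nonZeroDivisors

theorem Ideal.Quotient.isUnit_mk_iff_isCoprime_span_singleton {R : Type*} [CommRing R] {𝔣 : Ideal R}
    {b : R} : IsUnit (Ideal.Quotient.mk 𝔣 b) ↔ IsCoprime (Ideal.span {b}) 𝔣 := by
  rw [Ideal.isCoprime_iff_sup_eq, Ideal.eq_top_iff_one, Ideal.mem_span_singleton_sup,
    isUnit_iff_exists_inv]
  constructor
  · rintro ⟨c, hc⟩
    obtain ⟨c, rfl⟩ := Ideal.Quotient.mk_surjective c
    refine ⟨c, 1 - c * b, ?_, by ring⟩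
    rw [← Ideal.Quotient.eq_zero_iff_mem, map_sub, map_one, map_mul, mul_comm, hc, sub_self]
  · rintro ⟨a, j, hj, h⟩
    refine ⟨Ideal.Quotient.mk 𝔣 a, ?_⟩
    rw [← map_mul, ← map_one (Ideal.Quotient.mk 𝔣), Ideal.Quotient.mk_eq_mk_iff_sub_mem,
      show b * a - 1 = -j by rw [← h]; ring]
    exact neg_mem hj

theorem IsCoprime.iff_of_mul_eq_mul {R : Type*} [CommSemiring R] {a b c d f : R}
    (hb : IsCoprime b f) (hd : IsCoprime d f) (h : a * b = c * d) :
    IsCoprime a f ↔ IsCoprime c f := by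
  simpa [IsCoprime.mul_left_iff, hb, hd] using congrArg (IsCoprime · f) h

theorem FractionalIdeal.spanSingleton_mul_sup_eq_of_sub_mem_one {R P : Type*} [CommRing R]
    {S : Submonoid R} [CommRing P] [Algebra R P] [IsLocalization S P] (𝔞 : FractionalIdeal S P)
    {x y : P}
    (h : x - y ∈ (1 : FractionalIdeal S P)) :
    spanSingleton S x * 𝔞 ⊔ 𝔞 = spanSingleton S y * 𝔞 ⊔ 𝔞 := by
  suffices key : ∀ x y : P, x - y ∈ (1 : FractionalIdeal S P) →
      spanSingleton S x * 𝔞 ⊔ 𝔞 ≤ spanSingleton S y * 𝔞 ⊔ 𝔞 from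
    le_antisymm (key x y h) (key y x (by simpa using Submodule.neg_mem _ h))
  intro x y h
  have hx : spanSingleton S x ≤ spanSingleton S y + 1 :=
    spanSingleton_le_iff_mem.mpr ((mem_add _ _ _).mpr ⟨y, mem_spanSingleton_self S y, x - y, h,
      add_sub_cancel y x⟩)
  refine sup_le ?_ le_sup_right
  calc spanSingleton S x * 𝔞 ≤ (spanSingleton S y + 1) * 𝔞 := mul_le_mul_left hx 𝔞
    _ = spanSingleton S y * 𝔞 ⊔ 𝔞 := by rw [add_mul, one_mul, sup_eq_add]

section

variable {R K : Type*} [CommRing R] [IsDedekindDomain R] [Field K] [Algebra R K]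
  [IsFractionRing R K] {𝔣 I J : Ideal R} {α : K}

theorem spanSingleton_inv_mul_coeIdeal_mul_eq (hα : α ≠ 0)
    (hfac : (𝔣 : FractionalIdeal R⁰ K) * J = spanSingleton R⁰ α * I) :
    spanSingleton R⁰ α⁻¹ * (𝔣 * J) = I := by
  rw [hfac, ← mul_assoc, spanSingleton_mul_spanSingleton, inv_mul_cancel₀ hα, spanSingleton_one,
    one_mul]

theorem algebraMap_div_mem_of_mem_mul (hα : α ≠ 0)
    (hfac : (𝔣 : FractionalIdeal R⁰ K) * J = spanSingleton R⁰ α * I) {c : R} (hc : c ∈ 𝔣 * J) :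
    algebraMap R K c / α ∈ (I : FractionalIdeal R⁰ K) := by
  rw [← spanSingleton_inv_mul_coeIdeal_mul_eq hα hfac, ← coeIdeal_mul, div_eq_inv_mul]
  exact mem_singleton_mul.mpr ⟨_, mem_coeIdeal_of_mem R⁰ hc, rfl⟩

theorem spanSingleton_algebraMap_div_mul_le (hα : α ≠ 0)
    (hfac : (𝔣 : FractionalIdeal R⁰ K) * J = spanSingleton R⁰ α * I) {c : R} (hc : c ∈ J) :
    spanSingleton R⁰ (algebraMap R K c / α) * 𝔣 ≤ I := by
  refine spanSingleton_mul_le_iff.mpr fun z hz => ?_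
  obtain ⟨f, hf, rfl⟩ := (mem_coeIdeal R⁰).mp hz
  rw [div_mul_eq_mul_div, ← map_mul, mul_comm]
  exact algebraMap_div_mem_of_mem_mul hα hfac (Ideal.mul_mem_mul hf hc)

theorem algebraMap_div_mem_inv (h𝔣 : 𝔣 ≠ ⊥) (hα : α ≠ 0)
    (hfac : (𝔣 : FractionalIdeal R⁰ K) * J = spanSingleton R⁰ α * I) {c : R} (hc : c ∈ J) :
    algebraMap R K c / α ∈ (𝔣 : FractionalIdeal R⁰ K)⁻¹ := by
  rw [mem_inv_iff (coeIdeal_ne_zero.mpr h𝔣)]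
  intro y hy
  exact coeIdeal_le_one (spanSingleton_algebraMap_div_mul_le hα hfac hc
    (mul_mem_mul (mem_spanSingleton_self _ _) hy))

theorem mem_of_algebraMap_div_mem_one (hα : α ≠ 0)
    (hfac : (𝔣 : FractionalIdeal R⁰ K) * J = spanSingleton R⁰ α * I) (hI𝔣 : IsCoprime I 𝔣)
    {c : R} (hc : algebraMap R K c / α ∈ (1 : FractionalIdeal R⁰ K)) : c ∈ 𝔣 := by
  obtain ⟨r, hr⟩ := (mem_one_iff _).mp hc
  have hcr : algebraMap R K c = algebraMap R K r * α := by rw [hr, div_mul_cancel₀ _ hα]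
  have hspan : Ideal.span {c} * I = 𝔣 * (J * Ideal.span {r}) := by
    apply coeIdeal_injective (K := K)
    simp only [coeIdeal_mul, coeIdeal_span_singleton, hcr, ← spanSingleton_mul_spanSingleton]
    rw [← mul_assoc, hfac]
    ring
  exact Ideal.dvd_span_singleton.mp (hI𝔣.symm.dvd_of_dvd_mul_right (Dvd.intro _ hspan.symm))

theorem algebraMap_div_mem_one_iff (hα : α ≠ 0)
    (hfac : (𝔣 : FractionalIdeal R⁰ K) * J = spanSingleton R⁰ α * I) (hI𝔣 : IsCoprime I 𝔣)
    (hJ𝔣 : IsCoprime J 𝔣) {c : R} (hc : c ∈ J) :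
    algebraMap R K c / α ∈ (1 : FractionalIdeal R⁰ K) ↔ c ∈ 𝔣 := by
  refine ⟨mem_of_algebraMap_div_mem_one hα hfac hI𝔣, fun hc𝔣 => coeIdeal_le_one (I := I) ?_⟩
  refine algebraMap_div_mem_of_mem_mul hα hfac ?_
  rw [Ideal.mul_eq_inf_of_isCoprime hJ𝔣.symm]
  exact ⟨hc𝔣, hc⟩

theorem spanSingleton_algebraMap_div_mul_sup_eq_one_iff (hα : α ≠ 0)
    (hfac : (𝔣 : FractionalIdeal R⁰ K) * J = spanSingleton R⁰ α * I) (hI𝔣 : IsCoprime I 𝔣)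
    (hJ𝔣 : IsCoprime J 𝔣) {c : R} (hc : c ∈ J) :
    spanSingleton R⁰ (algebraMap R K c / α) * 𝔣 ⊔ 𝔣 = 1 ↔ IsUnit (Ideal.Quotient.mk 𝔣 c) := by
  obtain ⟨A, hA⟩ := le_one_iff_exists_coeIdeal.mp
    ((spanSingleton_algebraMap_div_mul_le hα hfac hc).trans coeIdeal_le_one)
  have hAJ : A * J = Ideal.span {c} * I := by
    apply coeIdeal_injective (K := K)
    dsimp only
    rw [coeIdeal_mul, coeIdeal_mul, hA, mul_assoc, hfac, ← mul_assoc,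
      spanSingleton_mul_spanSingleton, div_mul_cancel₀ _ hα, coeIdeal_span_singleton]
  rw [Ideal.Quotient.isUnit_mk_iff_isCoprime_span_singleton, ← hJ𝔣.iff_of_mul_eq_mul hI𝔣 hAJ,
    Ideal.isCoprime_iff_sup_eq, ← hA, sup_eq_add, ← coeIdeal_sup, coeIdeal_eq_one,
    Ideal.one_eq_top]

theorem exists_sub_algebraMap_div_mem_one (h𝔣 : 𝔣 ≠ ⊥) (hα : α ≠ 0)
    (hfac : (𝔣 : FractionalIdeal R⁰ K) * J = spanSingleton R⁰ α * I) (hI𝔣 : IsCoprime I 𝔣)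
    {a : K} (ha : a ∈ (𝔣 : FractionalIdeal R⁰ K)⁻¹) :
    ∃ c ∈ J, a - algebraMap R K c / α ∈ (1 : FractionalIdeal R⁰ K) := by
  have h𝔣inv : (𝔣 : FractionalIdeal R⁰ K)⁻¹ * 𝔣 = 1 := inv_mul_cancel₀ (coeIdeal_ne_zero.mpr h𝔣)
  have hdecomp : (𝔣 : FractionalIdeal R⁰ K)⁻¹ = spanSingleton R⁰ α⁻¹ * J + 1 := by
    calc (𝔣 : FractionalIdeal R⁰ K)⁻¹ = (𝔣 : FractionalIdeal R⁰ K)⁻¹ * ↑(I ⊔ 𝔣) := by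
          rw [Ideal.isCoprime_iff_sup_eq.mp hI𝔣, coeIdeal_top, mul_one]
      _ = (𝔣 : FractionalIdeal R⁰ K)⁻¹ * (spanSingleton R⁰ α⁻¹ * (𝔣 * J)) + 1 := by
          rw [coeIdeal_sup, mul_add, h𝔣inv, spanSingleton_inv_mul_coeIdeal_mul_eq hα hfac]
      _ = spanSingleton R⁰ α⁻¹ * J + 1 := by
          rw [mul_left_comm, ← mul_assoc (𝔣 : FractionalIdeal R⁰ K)⁻¹, h𝔣inv, one_mul]
  rw [hdecomp, mem_add] at ha
  obtain ⟨x, hx, r, hr, rfl⟩ := ha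
  obtain ⟨y, hy, rfl⟩ := mem_singleton_mul.mp hx
  obtain ⟨c, hc, rfl⟩ := (mem_coeIdeal R⁰).mp hy
  refine ⟨c, hc, ?_⟩
  rwa [div_eq_inv_mul, add_sub_cancel_left]

end

theorem stmt16_general (K : Type*) [Field K] [NumberField K]
    (𝔣 I J : Ideal (𝓞 K)) (h𝔣bot : 𝔣 ≠ ⊥) (hI𝔣 : IsCoprime I 𝔣) (hJ𝔣 : IsCoprime J 𝔣)
    (α : K) (hα : α ≠ 0)
    (hfac : (𝔣 : FractionalIdeal (𝓞 K)⁰ K) * (J : FractionalIdeal (𝓞 K)⁰ K) =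
      FractionalIdeal.spanSingleton (𝓞 K)⁰ α * (I : FractionalIdeal (𝓞 K)⁰ K))
    (d : 𝓞 K → 𝓞 K) (hdJ : ∀ b : 𝓞 K, d b ∈ J) (hdb : ∀ b : 𝓞 K, d b - b ∈ 𝔣) :
    (∀ b : 𝓞 K, IsUnit (Ideal.Quotient.mk 𝔣 b) →
      algebraMap (𝓞 K) K (d b) / α ∈ ((𝔣 : FractionalIdeal (𝓞 K)⁰ K))⁻¹ ∧
      FractionalIdeal.spanSingleton (𝓞 K)⁰ (algebraMap (𝓞 K) K (d b) / α) *
          (𝔣 : FractionalIdeal (𝓞 K)⁰ K) ⊔ (𝔣 : FractionalIdeal (𝓞 K)⁰ K) = 1) ∧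
    (∀ b b' : 𝓞 K, IsUnit (Ideal.Quotient.mk 𝔣 b) → IsUnit (Ideal.Quotient.mk 𝔣 b') →
      (algebraMap (𝓞 K) K (d b) / α - algebraMap (𝓞 K) K (d b') / α) ∈
        (1 : FractionalIdeal (𝓞 K)⁰ K) →
      Ideal.Quotient.mk 𝔣 b = Ideal.Quotient.mk 𝔣 b') ∧
    (∀ a : K, a ∈ ((𝔣 : FractionalIdeal (𝓞 K)⁰ K))⁻¹ →
      FractionalIdeal.spanSingleton (𝓞 K)⁰ a * (𝔣 : FractionalIdeal (𝓞 K)⁰ K) ⊔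
          (𝔣 : FractionalIdeal (𝓞 K)⁰ K) = 1 →
      ∃ b : 𝓞 K, IsUnit (Ideal.Quotient.mk 𝔣 b) ∧
        a - algebraMap (𝓞 K) K (d b) / α ∈ (1 : FractionalIdeal (𝓞 K)⁰ K)) := by
  have hd b : Ideal.Quotient.mk 𝔣 (d b) = Ideal.Quotient.mk 𝔣 b :=
    Ideal.Quotient.mk_eq_mk_iff_sub_mem _ _ |>.mpr (hdb b)
  have hcop {c} (hc : c ∈ J) := spanSingleton_algebraMap_div_mul_sup_eq_one_iff hα hfac hI𝔣 hJ𝔣 hc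
  have hker {c} (hc : c ∈ J) := algebraMap_div_mem_one_iff hα hfac hI𝔣 hJ𝔣 hc
  refine ⟨fun b hb => ⟨algebraMap_div_mem_inv h𝔣bot hα hfac (hdJ b),
    (hcop (hdJ b)).mpr (hd b ▸ hb)⟩, fun b b' _ _ hbb' => ?_, fun a ha ha𝔣 => ?_⟩
  · rw [div_sub_div_same, ← map_sub, hker (sub_mem (hdJ b) (hdJ b'))] at hbb'
    rwa [← hd b, ← hd b', Ideal.Quotient.mk_eq_mk_iff_sub_mem]
  · obtain ⟨c, hcJ, hac⟩ := exists_sub_algebraMap_div_mem_one h𝔣bot hα hfac hI𝔣 ha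
    have hdc : algebraMap (𝓞 K) K (d c - c) / α ∈ (1 : FractionalIdeal (𝓞 K)⁰ K) :=
      (hker (sub_mem (hdJ c) hcJ)).mpr (hdb c)
    have hadc : a - algebraMap (𝓞 K) K (d c) / α ∈ (1 : FractionalIdeal (𝓞 K)⁰ K) := by
      rw [map_sub, sub_div] at hdc
      simpa using Submodule.sub_mem _ hac hdc
    refine ⟨c, ?_, hadc⟩
    rwa [← hd c, ← hcop (hdJ c), ← spanSingleton_mul_sup_eq_of_sub_mem_one _ hadc]

/-- Let `𝔣` be an ideal of the ring of integers `O_K` of an imaginary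
quadratic field, coprime to `𝔪`, and let `I, J` be ideals coprime to `𝔣` and `𝔪` with
`𝔣·J = (α)·I` for some `α ∈ K^×`.  Then as `b` ranges over representatives of the
unit classes of `(O_K/𝔣)^×`, and `d_b ∈ J` is chosen with `d_b ≡ b (mod 𝔣)`, the
elements `a = d_b/α` range over a complete set of coset representatives of the classes
`[a] ∈ 𝔣⁻¹/O_K` with `(a)𝔣` coprime to `𝔣`:
(1) each such `a` lies in `𝔣⁻¹` and `(a)𝔣` is coprime to `𝔣` (expressed as
`(a)𝔣 ⊔ 𝔣 = 1` among fractional ideals);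
(2) distinct unit classes `b` give distinct classes modulo `O_K`;
(3) every class `[a] ∈ 𝔣⁻¹/O_K` with `(a)𝔣` coprime to `𝔣` arises this way. -/
theorem stmt16 (K : Type*) [Field K] [NumberField K]
    (hdeg : Module.finrank ℚ K = 2)
    (himag : ∀ v : NumberField.InfinitePlace K, v.IsComplex)
    (𝔪 𝔣 I J : Ideal (𝓞 K)) (h𝔣bot : 𝔣 ≠ ⊥)
    (h𝔣𝔪 : IsCoprime 𝔣 𝔪) (hI𝔣 : IsCoprime I 𝔣) (hI𝔪 : IsCoprime I 𝔪)
    (hJ𝔣 : IsCoprime J 𝔣) (hJ𝔪 : IsCoprime J 𝔪)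
    (α : K) (hα : α ≠ 0)
    (hfac : (𝔣 : FractionalIdeal (𝓞 K)⁰ K) * (J : FractionalIdeal (𝓞 K)⁰ K) =
      FractionalIdeal.spanSingleton (𝓞 K)⁰ α * (I : FractionalIdeal (𝓞 K)⁰ K))
    (d : 𝓞 K → 𝓞 K) (hdJ : ∀ b : 𝓞 K, d b ∈ J) (hdb : ∀ b : 𝓞 K, d b - b ∈ 𝔣) :
    (∀ b : 𝓞 K, IsUnit (Ideal.Quotient.mk 𝔣 b) →
      algebraMap (𝓞 K) K (d b) / α ∈ ((𝔣 : FractionalIdeal (𝓞 K)⁰ K))⁻¹ ∧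
      FractionalIdeal.spanSingleton (𝓞 K)⁰ (algebraMap (𝓞 K) K (d b) / α) *
          (𝔣 : FractionalIdeal (𝓞 K)⁰ K) ⊔ (𝔣 : FractionalIdeal (𝓞 K)⁰ K) = 1) ∧
    (∀ b b' : 𝓞 K, IsUnit (Ideal.Quotient.mk 𝔣 b) → IsUnit (Ideal.Quotient.mk 𝔣 b') →
      (algebraMap (𝓞 K) K (d b) / α - algebraMap (𝓞 K) K (d b') / α) ∈
        (1 : FractionalIdeal (𝓞 K)⁰ K) →
      Ideal.Quotient.mk 𝔣 b = Ideal.Quotient.mk 𝔣 b') ∧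
    (∀ a : K, a ∈ ((𝔣 : FractionalIdeal (𝓞 K)⁰ K))⁻¹ →
      FractionalIdeal.spanSingleton (𝓞 K)⁰ a * (𝔣 : FractionalIdeal (𝓞 K)⁰ K) ⊔
          (𝔣 : FractionalIdeal (𝓞 K)⁰ K) = 1 →
      ∃ b : 𝓞 K, IsUnit (Ideal.Quotient.mk 𝔣 b) ∧
        a - algebraMap (𝓞 K) K (d b) / α ∈ (1 : FractionalIdeal (𝓞 K)⁰ K)) :=
  stmt16_general K 𝔣 I J h𝔣bot hI𝔣 hJ𝔣 α hα hfac d hdJ hdb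
end
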